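/- Let k ∈ ℕ and let ℓ be an integer with 0 ≤ ℓ ≤ k. Then there exists a constant c_{k,ℓ} > 0 such that for all ξ₁, ξ₂ ∈ ℝ, the absolute value of the determinant of the k×k matrix whose columns are Γ_k'(ξ₁), Γ_k''(ξ₁), …, Γ_k^{(ℓ)}(ξ₁), Γ_k'(ξ₂), Γ_k''(ξ₂), …, Γ_k^{(k−ℓ)}(ξ₂) is at least c_{k,ℓ}·|ξ₁ − ξ₂|^{ℓ(k−ℓ)}. -/

import Mathlib

open MeasureTheory Real FourierTransform Finset
open scoped RealInnerProductSpace

noncomputable section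

/-- Euclidean space `ℝ^k`. -/
abbrev Ek (k : ℕ) := EuclideanSpace ℝ (Fin k)

/-- The moment curve `Γ_k(t) = (t, t², …, t^k)`. -/
def momentCurve (k : ℕ) (t : ℝ) : Ek k := WithLp.toLp 2 fun j => t ^ ((j : ℕ) + 1)

/-- The `i`-th derivative `Γ_k^{(i)}(t)` of the moment curve. -/
def momentDeriv (k i : ℕ) (t : ℝ) : Ek k := WithLp.toLp 2 fun j =>
  if i ≤ (j : ℕ) + 1 then (((j : ℕ) + 1).descFactorial i : ℝ) * t ^ ((j : ℕ) + 1 - i) else 0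

/-- The parallelepiped `C ⬝ 𝒰_J` for the interval `J = [a,b]`: centered at `Γ_k(c_J)`, with
`i`-th side of length `4|J|^i` in direction `Γ_k^{(i)}(c_J)`, dilated by factor `C` about
its center. -/
def UBox (k : ℕ) (C a b : ℝ) : Set (Ek k) :=
  {x | ∃ u : Fin k → ℝ, (∀ i : Fin k, abs (u i) ≤ C * (2 * (b - a) ^ ((i : ℕ) + 1))) ∧
    x = momentCurve k ((a + b) / 2) +
      ∑ i : Fin k, u i • momentDeriv k ((i : ℕ) + 1) ((a + b) / 2)}

/-- The dual parallelepiped `𝒰_J^o`. -/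
def UBoxDual (k : ℕ) (a b : ℝ) : Set (Ek k) :=
  {x | ∀ i : Fin k,
    abs (inner ℝ x (momentDeriv k ((i : ℕ) + 1) ((a + b) / 2)) : ℝ) ≤ ((b - a) ^ ((i : ℕ) + 1))⁻¹ / 4}

/-- The `L¹`-normalized bump function `φ_J` adapted to `𝒰_J^o`, `J = [a,b]`. -/
def phiBump (k : ℕ) (a b : ℝ) (x : Ek k) : ℝ :=
  ((volume (UBoxDual k a b)).toReal)⁻¹ *
    sInf {t : ℝ | 1 ≤ t ∧ t⁻¹ • x ∈ UBoxDual k a b} ^ (-(10 * (k : ℝ)))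

/-- `L^p`-norm (with real exponent) of a function on `ℝ^k`. -/
def LpN {k : ℕ} (p : ℝ) (f : Ek k → ℂ) : ℝ := (∫ x, ‖f x‖ ^ p) ^ p⁻¹

/-- Convolution of two real-valued functions on `ℝ^k`. -/
def cnv {k : ℕ} (f g : Ek k → ℝ) (x : Ek k) : ℝ := ∫ y, f y * g (x - y)

/-- The critical decoupling exponent `p_k = k(k+1)`. -/
def pk (k : ℕ) : ℝ := k * (k + 1)

/-- The `ℓ²L^{p_k}` decoupling inequality for the moment curve `Γ_k` at scale `δ = 1/n`
with constant `C`. -/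
def DecIneq (k n : ℕ) (C : ℝ) : Prop :=
  ∀ f : ℕ → SchwartzMap (Ek k) ℂ,
    (∀ j < n, Function.support (𝓕 ⇑(f j)) ⊆ UBox k 1 ((j : ℝ) / n) (((j : ℝ) + 1) / n)) →
    LpN (pk k) (fun x => ∑ j ∈ Finset.range n, f j x) ≤
      C * (∑ j ∈ Finset.range n, LpN (pk k) (f j) ^ 2) ^ ((1 : ℝ) / 2)

/-- The decoupling constant `𝒟_k(δ)`, `δ = 1/n`: the smallest constant, monotone
nonincreasing in `δ`, for which the decoupling inequality holds. -/
def DecConst (k n : ℕ) : ℝ :=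
  sInf {C : ℝ | 0 ≤ C ∧ ∀ m : ℕ, 0 < m → m ≤ n → DecIneq k m C}

/-- The bilinear decoupling inequality for `Γ_k` at scale `δ = 1/n` with constant `C`. -/
def BilinIneq (k n : ℕ) (C : ℝ) : Prop :=
  ∀ (α β : ℝ) (m₁ m₂ : ℕ), 0 < m₁ → 0 < m₂ →
    0 ≤ α → α + (m₁ : ℝ) / n ≤ 1 → 0 ≤ β → β + (m₂ : ℝ) / n ≤ 1 →
    (∀ x ∈ Set.Icc α (α + (m₁ : ℝ) / n), ∀ y ∈ Set.Icc β (β + (m₂ : ℝ) / n),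
      (4 : ℝ)⁻¹ ≤ |x - y|) →
    ∀ f g : ℕ → SchwartzMap (Ek k) ℂ,
    (∀ j < m₁, Function.support (𝓕 ⇑(f j)) ⊆ UBox k 1 (α + j / n) (α + (j + 1) / n)) →
    (∀ j < m₂, Function.support (𝓕 ⇑(g j)) ⊆ UBox k 1 (β + j / n) (β + (j + 1) / n)) →
    (∫ x, ‖∑ j ∈ Finset.range m₁, f j x‖ ^ (pk k / 2) *
        ‖∑ j ∈ Finset.range m₂, g j x‖ ^ (pk k / 2)) ^ (pk k)⁻¹ ≤
      C * (∑ j ∈ Finset.range m₁, LpN (pk k) (f j) ^ 2) ^ ((1 : ℝ) / 4) *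
        (∑ j ∈ Finset.range m₂, LpN (pk k) (g j) ^ 2) ^ ((1 : ℝ) / 4)

/-- The bilinear decoupling constant `ℬ_k(δ)`, `δ = 1/n`, monotone nonincreasing in `δ`. -/
def BilinConst (k n : ℕ) : ℝ :=
  sInf {C : ℝ | 0 ≤ C ∧ ∀ m : ℕ, 0 < m → m ≤ n → BilinIneq k m C}

/-- Partial sum `Σ_{m ∈ [s,t)} f_m` of a family of Schwartz functions,
corresponding to `f_L = Σ_{K ∈ 𝒫(L,δ)} f_K`. -/
def fSum (f : ℕ → SchwartzMap (Ek 3) ℂ) (s t : ℕ) (x : Ek 3) : ℂ :=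
  ∑ m ∈ Finset.Ico s t, f m x

/-- The asymmetric bilinear inequality on `ℝ³` with exponents `(e₁, e₂)` on the left and
`(r₁, r₂)` on the right, at scale `δ = 1/n`, with first interval of length `1/na` and
second interval of length `1/nb`, with constant `C`. -/
def MIneq (e₁ e₂ r₁ r₂ : ℝ) (n na nb : ℕ) (C : ℝ) : Prop :=
  ∀ α β : ℝ, 0 ≤ α → α + (na : ℝ)⁻¹ ≤ 1 → 0 ≤ β → β + (nb : ℝ)⁻¹ ≤ 1 →
    (∀ x ∈ Set.Icc α (α + (na : ℝ)⁻¹), ∀ y ∈ Set.Icc β (β + (nb : ℝ)⁻¹),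
      (4 : ℝ)⁻¹ ≤ |x - y|) →
    ∀ f g : ℕ → SchwartzMap (Ek 3) ℂ,
    (∀ j < n / na, Function.support (𝓕 ⇑(f j)) ⊆
      UBox 3 1 (α + (j : ℝ) / n) (α + ((j : ℝ) + 1) / n)) →
    (∀ j < n / nb, Function.support (𝓕 ⇑(g j)) ⊆
      UBox 3 1 (β + (j : ℝ) / n) (β + ((j : ℝ) + 1) / n)) →
    ∫ x, cnv (fun y => ‖∑ j ∈ Finset.range (n / na), f j y‖ ^ e₁)
        (phiBump 3 α (α + (na : ℝ)⁻¹)) x *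
      cnv (fun y => ‖∑ j ∈ Finset.range (n / nb), g j y‖ ^ e₂)
        (phiBump 3 β (β + (nb : ℝ)⁻¹)) x ≤
      C ^ (12 : ℕ) * (∑ j ∈ Finset.range (n / na), LpN 12 (f j) ^ 2) ^ r₁ *
        (∑ j ∈ Finset.range (n / nb), LpN 12 (g j) ^ 2) ^ r₂

/-- `M_{6,a,b}(δ)` where `δ = 1/n`, `δ^a = 1/na`, `δ^b = 1/nb`. -/
def M6 (n na nb : ℕ) : ℝ := sInf {C : ℝ | 0 ≤ C ∧ MIneq 6 6 3 3 n na nb C}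

/-- `M_{2,a,b}(δ)` where `δ = 1/n`, `δ^a = 1/na`, `δ^b = 1/nb`. -/
def M2 (n na nb : ℕ) : ℝ := sInf {C : ℝ | 0 ≤ C ∧ MIneq 2 10 1 5 n na nb C}

end

/-! Shifting `t ↦ t + s` acts on `Γ_k', Γ_k'', …` by one and the same unipotent lower-triangular
matrix (the binomial expansion of `(t + s)^(r+1)`), and rescaling `t ↦ c t` multiplies row `r`
by `c^(r+1)` and a column of order `d` by `c^(-d)`. Hence the determinant is
`(ξ₁ - ξ₂)^(ℓ(k-ℓ))` times its value at `(ξ₁, ξ₂) = (1, 0)`. That value is nonzero: a vector `v`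
in the left kernel gives a polynomial `p = ∑ v_r X^(r+1)` whose derivative has degree `< k` but
vanishes to order `ℓ` at `1` and to order `k - ℓ` at `0`. -/

open Polynomial Matrix

lemma momentDeriv_apply (k i : ℕ) (t : ℝ) (r : Fin k) :
    momentDeriv k i t r = (((r : ℕ) + 1).descFactorial i : ℝ) * t ^ ((r : ℕ) + 1 - i) := by
  by_cases hi : i ≤ (r : ℕ) + 1
  · exact if_pos hi
  · rw [Nat.descFactorial_eq_zero_iff_lt.mpr (by omega), Nat.cast_zero, zero_mul]
    exact if_neg hi

lemma momentDeriv_apply_eq_eval (k i : ℕ) (t : ℝ) (r : Fin k) :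
    momentDeriv k i t r = (derivative^[i] (X ^ ((r : ℕ) + 1) : ℝ[X])).eval t := by
  rw [momentDeriv_apply, iterate_derivative_X_pow_eq_C_mul, eval_mul, eval_C, eval_pow, eval_X]

def momentDerivMatrix (k : ℕ) (d : Fin k → ℕ) (ξ : Fin k → ℝ) : Matrix (Fin k) (Fin k) ℝ :=
  Matrix.of fun r j => momentDeriv k (d j) (ξ j) r

def shiftMatrix (k : ℕ) (s : ℝ) : Matrix (Fin k) (Fin k) ℝ :=
  Matrix.of fun r q => (((r : ℕ) + 1).choose ((q : ℕ) + 1) : ℝ) * s ^ ((r : ℕ) - q)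

lemma det_shiftMatrix (k : ℕ) (s : ℝ) : (shiftMatrix k s).det = 1 := by
  rw [det_of_isLowerTriangular _ fun r q (hrq : r < q) => by
    simp [shiftMatrix, Nat.choose_eq_zero_of_lt (show (r : ℕ) + 1 < q + 1 by omega)]]
  simp [shiftMatrix]

lemma X_add_C_pow_eq_sum_shiftMatrix (k : ℕ) (s : ℝ) (r : Fin k) :
    (X + C s) ^ ((r : ℕ) + 1) =
      C (s ^ ((r : ℕ) + 1)) + ∑ q : Fin k, C (shiftMatrix k s r q) * X ^ ((q : ℕ) + 1) := by
  simp only [shiftMatrix, of_apply]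
  rw [Fin.sum_univ_eq_sum_range
      (fun q => C (((r + 1 : ℕ).choose (q + 1) : ℝ) * s ^ ((r : ℕ) - q)) * X ^ (q + 1)) k,
    ← sum_subset (range_subset_range.2 r.isLt) fun q _ hq => by
      simp [Nat.choose_eq_zero_of_lt (show (r : ℕ) + 1 < q + 1 by simp at hq; omega)],
    add_pow, sum_range_succ', add_comm]
  congr 1
  · simp
  · refine sum_congr rfl fun q hq => ?_
    rw [show (r : ℕ) + 1 - (q + 1) = r - q by omega]
    simp only [C_mul, C_pow, ← C_eq_natCast]
    ring

lemma momentDeriv_add_apply (k i : ℕ) (hi : 1 ≤ i) (t s : ℝ) (r : Fin k) :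
    momentDeriv k i (t + s) r = ∑ q, shiftMatrix k s r q * momentDeriv k i t q := by
  have h := congrArg (fun p => (derivative^[i] p).eval t) (X_add_C_pow_eq_sum_shiftMatrix k s r)
  simp only [iterate_derivative_X_add_pow, iterate_map_add, iterate_derivative_C hi,
    iterate_derivative_sum, iterate_derivative_C_mul, zero_add, eval_finsetSum, eval_mul, eval_C,
    eval_natCast, eval_pow, eval_add, eval_X, nsmul_eq_mul] at h
  rw [momentDeriv_apply, h]
  simp only [momentDeriv_apply_eq_eval]

lemma momentDerivMatrix_add_const {k : ℕ} (d : Fin k → ℕ) (hd : ∀ j, 1 ≤ d j) (ξ : Fin k → ℝ)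
    (s : ℝ) :
    momentDerivMatrix k d (fun j => ξ j + s) = shiftMatrix k s * momentDerivMatrix k d ξ := by
  ext r j
  exact momentDeriv_add_apply k (d j) (hd j) (ξ j) s r

lemma det_momentDerivMatrix_add_const {k : ℕ} (d : Fin k → ℕ) (hd : ∀ j, 1 ≤ d j)
    (ξ : Fin k → ℝ) (s : ℝ) :
    (momentDerivMatrix k d (fun j => ξ j + s)).det = (momentDerivMatrix k d ξ).det := by
  rw [momentDerivMatrix_add_const d hd, det_mul, det_shiftMatrix, one_mul]

lemma momentDerivMatrix_smul_mul_diagonal {k : ℕ} (d : Fin k → ℕ) (ξ : Fin k → ℝ) (c : ℝ) :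
    momentDerivMatrix k d (c • ξ) * diagonal (fun j => c ^ d j) =
      diagonal (fun r : Fin k => c ^ ((r : ℕ) + 1)) * momentDerivMatrix k d ξ := by
  ext r j
  simp only [mul_diagonal, diagonal_mul, momentDerivMatrix, of_apply, momentDeriv_apply,
    Pi.smul_apply, smul_eq_mul]
  by_cases h : d j ≤ (r : ℕ) + 1
  · rw [mul_pow, ← Nat.sub_add_cancel h, pow_add, Nat.add_sub_cancel]
    ring
  · simp [Nat.descFactorial_eq_zero_iff_lt.mpr (not_le.mp h)]

lemma continuous_det_momentDerivMatrix_smul {k : ℕ} (d : Fin k → ℕ) (ξ : Fin k → ℝ) :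
    Continuous fun c : ℝ => (momentDerivMatrix k d (c • ξ)).det := by
  refine Continuous.matrix_det (continuous_pi fun r => continuous_pi fun j => ?_)
  simp only [momentDerivMatrix, of_apply, momentDeriv_apply, Pi.smul_apply, smul_eq_mul]
  fun_prop

lemma det_momentDerivMatrix_smul {k : ℕ} (d : Fin k → ℕ) (ξ : Fin k → ℝ) {e : ℕ}
    (he : ∑ j, d j + e = ∑ r : Fin k, ((r : ℕ) + 1)) (c : ℝ) :
    (momentDerivMatrix k d (c • ξ)).det = c ^ e * (momentDerivMatrix k d ξ).det := by
  -- The scaling identity settles `c ≠ 0`; continuity in `c` then covers `c = 0`.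
  suffices (fun c : ℝ => (momentDerivMatrix k d (c • ξ)).det) =
      fun c => c ^ e * (momentDerivMatrix k d ξ).det from congrFun this c
  refine (continuous_det_momentDerivMatrix_smul d ξ).ext_on (dense_compl_singleton 0)
    (by fun_prop) fun c (hc : c ≠ 0) => ?_
  have h := congrArg det (momentDerivMatrix_smul_mul_diagonal d ξ c)
  rw [det_mul, det_mul, det_diagonal, det_diagonal, prod_pow_eq_pow_sum, prod_pow_eq_pow_sum,
    ← he, pow_add] at h
  exact mul_right_cancel₀ (pow_ne_zero _ hc) (by linear_combination h)

theorem Polynomial.le_rootMultiplicity_of_isRoot_iterate_derivative {K : Type*} [Field K]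
    [CharZero K] {q : K[X]} (hq : q ≠ 0) {a : K} {m : ℕ}
    (h : ∀ i < m, (derivative^[i] q).IsRoot a) : m ≤ q.rootMultiplicity a := by
  cases m with
  | zero => exact Nat.zero_le _
  | succ m => exact lt_rootMultiplicity_of_isRoot_iterate_derivative hq fun i hi => h i (by omega)

theorem Polynomial.add_le_natDegree_of_isRoot_iterate_derivative {K : Type*} [Field K]
    [CharZero K] {q : K[X]} (hq : q ≠ 0) {a b : K} (hab : a ≠ b) {m n : ℕ}
    (ha : ∀ i < m, (derivative^[i] q).IsRoot a) (hb : ∀ i < n, (derivative^[i] q).IsRoot b) :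
    m + n ≤ q.natDegree := by
  have hdvd : (X - C a) ^ m * (X - C b) ^ n ∣ q :=
    (isCoprime_X_sub_C_of_isUnit_sub (sub_ne_zero.2 hab).isUnit).pow.mul_dvd
      ((le_rootMultiplicity_iff hq).1 (le_rootMultiplicity_of_isRoot_iterate_derivative hq ha))
      ((le_rootMultiplicity_iff hq).1 (le_rootMultiplicity_of_isRoot_iterate_derivative hq hb))
  simpa [natDegree_mul, X_sub_C_ne_zero] using natDegree_le_of_dvd hdvd hq

lemma vecMul_momentDerivMatrix {k : ℕ} (d : Fin k → ℕ) (ξ : Fin k → ℝ) (v : Fin k → ℝ)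
    (j : Fin k) : (v ᵥ* momentDerivMatrix k d ξ) j =
      (derivative^[d j] (∑ r, C (v r) * X ^ ((r : ℕ) + 1))).eval (ξ j) := by
  simp [vecMul, dotProduct, momentDerivMatrix, momentDeriv_apply_eq_eval, iterate_derivative_sum,
    iterate_derivative_C_mul, eval_finsetSum]

def twoPointOrder {k : ℕ} (ℓ : ℕ) (j : Fin k) : ℕ := if (j : ℕ) < ℓ then j + 1 else j - ℓ + 1

def twoPointNodes {k : ℕ} (ℓ : ℕ) (a b : ℝ) (j : Fin k) : ℝ := if (j : ℕ) < ℓ then a else b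

lemma one_le_twoPointOrder {k : ℕ} (ℓ : ℕ) (j : Fin k) : 1 ≤ twoPointOrder ℓ j := by
  unfold twoPointOrder; split_ifs <;> omega

lemma sum_twoPointOrder_add {k ℓ : ℕ} (hℓ : ℓ ≤ k) :
    ∑ j : Fin k, twoPointOrder ℓ j + ℓ * (k - ℓ) = ∑ r : Fin k, ((r : ℕ) + 1) := by
  have hsplit : ∑ j : Fin k, (if (j : ℕ) < ℓ then 0 else ℓ) = ℓ * (k - ℓ) := by
    rw [Fin.sum_univ_eq_sum_range (fun j => if j < ℓ then 0 else ℓ), range_eq_Ico,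
      ← sum_Ico_consecutive _ (Nat.zero_le ℓ) hℓ, sum_eq_zero fun j hj => if_pos (mem_Ico.1 hj).2,
      sum_congr rfl fun j hj => if_neg (Nat.not_lt.2 (mem_Ico.1 hj).1)]
    simp [mul_comm]
  rw [← hsplit, ← sum_add_distrib]
  refine sum_congr rfl fun j _ => ?_
  unfold twoPointOrder
  split_ifs <;> omega

lemma det_momentDerivMatrix_twoPointNodes_ne_zero {k ℓ : ℕ} (hℓ : ℓ ≤ k) {a b : ℝ}
    (hab : a ≠ b) :
    (momentDerivMatrix k (twoPointOrder ℓ) (twoPointNodes ℓ a b)).det ≠ 0 := by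
  intro h
  obtain ⟨v, hv, hvM⟩ := exists_vecMul_eq_zero_iff.2 h
  set p : ℝ[X] := ∑ r, C (v r) * X ^ ((r : ℕ) + 1)
  have hroot (j : Fin k) : (derivative^[twoPointOrder ℓ j] p).IsRoot (twoPointNodes ℓ a b j) := by
    rw [IsRoot, ← vecMul_momentDerivMatrix, hvM, Pi.zero_apply]
  have hcoeff (r : Fin k) : p.coeff ((r : ℕ) + 1) = v r := by
    simp [p, finsetSum_coeff, Fin.val_inj]
  have hq : derivative p ≠ 0 := by
    intro hq
    refine hv (funext fun r => ?_)
    rw [← hcoeff, eq_C_of_derivative_eq_zero hq, coeff_C]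
    simp
  have hk : ℓ + (k - ℓ) ≤ (derivative p).natDegree := by
    refine add_le_natDegree_of_isRoot_iterate_derivative hq hab (fun i hi => ?_) fun i hi => ?_
    · have := hroot ⟨i, by omega⟩
      simp only [twoPointOrder, twoPointNodes, if_pos hi] at this
      rwa [Function.iterate_succ_apply] at this
    · have := hroot ⟨ℓ + i, by omega⟩
      simp only [twoPointOrder, twoPointNodes, if_neg (Nat.not_lt.2 (Nat.le_add_right ℓ i)),
        Nat.add_sub_cancel_left] at this
      rwa [Function.iterate_succ_apply] at this
  have hpk : p.natDegree ≤ k :=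
    natDegree_sum_le_of_forall_le _ _ fun r _ => (natDegree_C_mul_X_pow_le _ _).trans r.isLt
  have := natDegree_derivative_lt (derivative_ne_zero.1 hq)
  omega

lemma det_momentDerivMatrix_twoPointNodes {k ℓ : ℕ} (hℓ : ℓ ≤ k) (a b : ℝ) :
    (momentDerivMatrix k (twoPointOrder ℓ) (twoPointNodes ℓ a b)).det =
      (a - b) ^ (ℓ * (k - ℓ)) *
        (momentDerivMatrix k (twoPointOrder ℓ) (twoPointNodes ℓ 1 0)).det := by
  have hnodes : twoPointNodes ℓ a b = fun j : Fin k => ((a - b) • twoPointNodes ℓ 1 0) j + b := by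
    ext j
    simp only [twoPointNodes, Pi.smul_apply, smul_eq_mul]
    split_ifs <;> ring
  rw [hnodes, det_momentDerivMatrix_add_const _ (one_le_twoPointOrder ℓ),
    det_momentDerivMatrix_smul _ _ (sum_twoPointOrder_add hℓ)]

noncomputable section

theorem stmt10 (k ℓ : ℕ) (hℓ : ℓ ≤ k) :
    ∃ c > (0:ℝ), ∀ ξ₁ ξ₂ : ℝ,
      c * |ξ₁ - ξ₂| ^ (ℓ * (k - ℓ)) ≤
        |(Matrix.of fun r j : Fin k =>
          if (j : ℕ) < ℓ then momentDeriv k ((j : ℕ) + 1) ξ₁ r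
          else momentDeriv k ((j : ℕ) - ℓ + 1) ξ₂ r).det| := by
  refine ⟨_, abs_pos.2 (det_momentDerivMatrix_twoPointNodes_ne_zero hℓ one_ne_zero),
    fun ξ₁ ξ₂ => le_of_eq ?_⟩
  have hmatrix : (Matrix.of fun r j : Fin k =>
      if (j : ℕ) < ℓ then momentDeriv k ((j : ℕ) + 1) ξ₁ r
      else momentDeriv k ((j : ℕ) - ℓ + 1) ξ₂ r) =
      momentDerivMatrix k (twoPointOrder ℓ) (twoPointNodes ℓ ξ₁ ξ₂) := by
    ext r j
    simp only [momentDerivMatrix, twoPointOrder, twoPointNodes, of_apply]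
    split_ifs <;> rfl
  rw [hmatrix, det_momentDerivMatrix_twoPointNodes hℓ ξ₁ ξ₂, abs_mul, abs_pow, mul_comm]

end
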